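/- Let G be a finite group acting smoothly and effectively on a connected open subset U of ℝⁿ, and let x ∈ U be a fixed point of the action. Then the map G → GL(ℝⁿ) sending g to the differential at x of the diffeomorphism induced by g is an injective group homomorphism. -/

import Mathlib

open scoped Topology

/-- For a finite group `G` acting smoothly and effectively on a connected open
subset `U ⊆ ℝⁿ` fixing a point `x`, the map `g ↦ d_xΦ_g` is an injective group
homomorphism into `GL(ℝⁿ)`. -/
theorem stmt9 {n : ℕ} {G : Type*} [Group G] [Finite G]
    (U : Set (EuclideanSpace ℝ (Fin n))) (hU : IsOpen U) (hUc : IsConnected U)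
    (Φ : G → EuclideanSpace ℝ (Fin n) → EuclideanSpace ℝ (Fin n))
    (hmaps : ∀ g, Set.MapsTo (Φ g) U U)
    (hsmooth : ∀ g, ContDiffOn ℝ (⊤ : ℕ∞) (Φ g) U)
    (hone : ∀ x ∈ U, Φ 1 x = x)
    (hmul : ∀ g h : G, ∀ x ∈ U, Φ (g * h) x = Φ g (Φ h x))
    (heff : ∀ g : G, (∀ x ∈ U, Φ g x = x) → g = 1)
    (x : EuclideanSpace ℝ (Fin n)) (hx : x ∈ U) (hfix : ∀ g, Φ g x = x) :
    (∀ g h : G, fderivWithin ℝ (Φ (g * h)) U x =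
        (fderivWithin ℝ (Φ g) U x).comp (fderivWithin ℝ (Φ h) U x)) ∧
    Function.Injective (fun g : G => fderivWithin ℝ (Φ g) U x) := by
  -- differentiability
  have hdiff : ∀ g : G, ∀ y ∈ U, DifferentiableAt ℝ (Φ g) y := fun g y hy =>
    ((hsmooth g).contDiffAt (hU.mem_nhds hy)).differentiableAt (by simp)
  -- chain rule at any point of U
  have hcomp : ∀ g h : G, ∀ y ∈ U, fderiv ℝ (Φ (g * h)) y
      = (fderiv ℝ (Φ g) (Φ h y)).comp (fderiv ℝ (Φ h) y) := by
    intro g h y hy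
    have h1 : Φ (g * h) =ᶠ[𝓝 y] (Φ g ∘ Φ h) :=
      Filter.eventuallyEq_of_mem (hU.mem_nhds hy) (fun z hz => hmul g h z hz)
    rw [h1.fderiv_eq]
    exact fderiv_comp y (hdiff g _ (hmaps h hy)) (hdiff h y hy)
  have hone' : ∀ y ∈ U, fderiv ℝ (Φ 1) y = ContinuousLinearMap.id ℝ (EuclideanSpace ℝ (Fin n)) := by
    intro y hy
    have h1 : Φ 1 =ᶠ[𝓝 y] id :=
      Filter.eventuallyEq_of_mem (hU.mem_nhds hy) (fun z hz => hone z hz)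
    rw [h1.fderiv_eq, fderiv_id]
  -- the homomorphism property, fderiv version, at x
  have hA : ∀ g h : G, fderiv ℝ (Φ (g * h)) x
      = (fderiv ℝ (Φ g) x).comp (fderiv ℝ (Φ h) x) := by
    intro g h
    rw [hcomp g h x hx, hfix h]
  -- key: trivial kernel (Bochner linearization argument)
  have key : ∀ g : G, fderiv ℝ (Φ g) x = ContinuousLinearMap.id ℝ (EuclideanSpace ℝ (Fin n)) → g = 1 := by
    intro g hg
    apply heff
    have : PreconnectedSpace U := Subtype.preconnectedSpace hUc.isPreconnected
    set S : Set U := {y : U | Φ g ↑y = ↑y ∧ fderiv ℝ (Φ g) ↑y = ContinuousLinearMap.id ℝ (EuclideanSpace ℝ (Fin n))}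
      with hS
    have hclosed : IsClosed S := by
      have c1 : Continuous fun y : U => Φ g ↑y := (hsmooth g).continuousOn.restrict
      have c2 : Continuous fun y : U => fderiv ℝ (Φ g) ↑y :=
        ((hsmooth g).continuousOn_fderiv_of_isOpen hU (by simp)).restrict
      exact (isClosed_eq c1 continuous_subtype_val).inter (isClosed_eq c2 continuous_const)
    have hopen : IsOpen S := by
      rw [isOpen_iff_forall_mem_open]
      rintro ⟨y, hyU⟩ ⟨hy1, hy2⟩
      -- Bochner trick at y
      set k := orderOf g with hk
      have hkpos : 0 < k := orderOf_pos g
      have hpow : ∀ j : ℕ, Φ (g ^ j) y = y ∧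
          fderiv ℝ (Φ (g ^ j)) y = ContinuousLinearMap.id ℝ (EuclideanSpace ℝ (Fin n)) := by
        intro j
        induction j with
        | zero => simpa [pow_zero] using ⟨hone y hyU, hone' y hyU⟩
        | succ j ih =>
          constructor
          · rw [pow_succ, hmul (g ^ j) g y hyU, hy1, ih.1]
          · rw [pow_succ, hcomp (g ^ j) g y hyU, hy1, ih.2, hy2,
              ContinuousLinearMap.comp_id]
      set F : EuclideanSpace ℝ (Fin n) → EuclideanSpace ℝ (Fin n) := fun z => (k : ℝ)⁻¹ • ∑ j ∈ Finset.range k, Φ (g ^ j) z with hF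
      have hFd : HasStrictFDerivAt F
          ((ContinuousLinearEquiv.refl ℝ (EuclideanSpace ℝ (Fin n)) : EuclideanSpace ℝ (Fin n) ≃L[ℝ] EuclideanSpace ℝ (Fin n)) : EuclideanSpace ℝ (Fin n) →L[ℝ] EuclideanSpace ℝ (Fin n)) y := by
        have h1 : HasStrictFDerivAt (fun z => ∑ j ∈ Finset.range k, Φ (g ^ j) z)
            (∑ j ∈ Finset.range k, ContinuousLinearMap.id ℝ (EuclideanSpace ℝ (Fin n))) y := by
          apply HasStrictFDerivAt.fun_sum
          intro j _
          have := ((hsmooth (g ^ j)).contDiffAt (hU.mem_nhds hyU)).hasStrictFDerivAt (by simp)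
          rwa [(hpow j).2] at this
        have h2 := h1.const_smul ((k : ℝ)⁻¹)
        refine h2.congr_fderiv ?_
        refine ContinuousLinearMap.ext fun v => ?_
        simp only [ContinuousLinearMap.smul_apply, ContinuousLinearMap.coe_sum',
          Finset.sum_apply, ContinuousLinearMap.coe_id', id_eq, Finset.sum_const,
          Finset.card_range, ContinuousLinearEquiv.coe_refl, ContinuousLinearEquiv.coe_coe,
          ContinuousLinearEquiv.refl_apply]
        rw [← Nat.cast_smul_eq_nsmul ℝ, smul_smul,
          inv_mul_cancel₀ (by exact_mod_cast hkpos.ne'), one_smul]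
      set φ := hFd.toOpenPartialHomeomorph F with hφ
      have hysrc : y ∈ φ.source := hFd.mem_toOpenPartialHomeomorph_source
      set W : Set (EuclideanSpace ℝ (Fin n)) := (U ∩ Φ g ⁻¹' φ.source) ∩ φ.source with hWdef
      have hWopen : IsOpen W :=
        (((hsmooth g).continuousOn.isOpen_inter_preimage hU φ.open_source)).inter φ.open_source
      have hyW : y ∈ W := ⟨⟨hyU, by rw [Set.mem_preimage, hy1]; exact hysrc⟩, hysrc⟩
      have hWU : W ⊆ U := fun z hz => hz.1.1
      -- Φ g is the identity on W
      have hid : ∀ z ∈ W, Φ g z = z := by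
        rintro z ⟨⟨hzU, hzpre⟩, hzsrc⟩
        have hFeq : F (Φ g z) = F z := by
          have hsum : ∑ j ∈ Finset.range k, Φ (g ^ j) (Φ g z)
              = ∑ j ∈ Finset.range k, Φ (g ^ j) z := by
            have e1 : ∀ j, Φ (g ^ j) (Φ g z) = Φ (g ^ (j + 1)) z := by
              intro j
              rw [pow_succ, hmul (g ^ j) g z hzU]
            simp only [e1]
            have e2 : Φ (g ^ k) z = Φ (g ^ 0) z := by
              rw [pow_orderOf_eq_one, pow_zero]
            have e3 := Finset.sum_range_succ' (fun j => Φ (g ^ j) z) k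
            have e4 := Finset.sum_range_succ (fun j => Φ (g ^ j) z) k
            have e5 : (∑ j ∈ Finset.range k, Φ (g ^ (j + 1)) z) + Φ (g ^ 0) z
                = (∑ j ∈ Finset.range k, Φ (g ^ j) z) + Φ (g ^ 0) z := by
              rw [← e3, e4, e2]
            exact add_right_cancel e5
          simp only [hF, hsum]
        have hcoe := hFd.toOpenPartialHomeomorph_coe
        exact φ.injOn hzpre hzsrc (by
          show φ (Φ g z) = φ z
          rw [hφ]
          change (hFd.toOpenPartialHomeomorph F : EuclideanSpace ℝ (Fin n) → EuclideanSpace ℝ (Fin n)) (Φ g z)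
            = (hFd.toOpenPartialHomeomorph F : EuclideanSpace ℝ (Fin n) → EuclideanSpace ℝ (Fin n)) z
          rw [hcoe]
          exact hFeq)
      refine ⟨Subtype.val ⁻¹' W, ?_, ?_, hyW⟩
      · rintro ⟨z, hzU⟩ hzW
        refine ⟨hid z hzW, ?_⟩
        have h1 : Φ g =ᶠ[𝓝 z] id :=
          Filter.eventuallyEq_of_mem (hWopen.mem_nhds hzW) (fun w hw => hid w hw)
        rw [h1.fderiv_eq, fderiv_id]
      · exact hWopen.preimage continuous_subtype_val
    have hne : S.Nonempty := ⟨⟨x, hx⟩, hfix g, hg⟩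
    have hclop : IsClopen S := ⟨hclosed, hopen⟩
    have := hclop.eq_univ hne
    intro y hy
    have : (⟨y, hy⟩ : U) ∈ S := by rw [this]; trivial
    exact this.1
  -- translate fderivWithin to fderiv
  have hW : ∀ g : G, fderivWithin ℝ (Φ g) U x = fderiv ℝ (Φ g) x := fun g =>
    fderivWithin_of_isOpen hU hx
  constructor
  · intro g h
    rw [hW, hW, hW, hA]
  · intro g h hgh
    simp only [hW] at hgh
    have h1 : fderiv ℝ (Φ (g * h⁻¹)) x = ContinuousLinearMap.id ℝ (EuclideanSpace ℝ (Fin n)) := by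
      rw [hA, hgh, ← hA, mul_inv_cancel, hone' x hx]
    have := key _ h1
    rwa [mul_inv_eq_one] at this
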